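/- arXiv:0707.0093 — 3 statements merged into one kernel-verified Lean document; each statement's English description precedes it below -/
import Mathlib

section
/- If μ_0, μ_1, …, μ_ℓ is a sequence of distributions obtained by applying a sequence of lossy moves (μ_i = v_i↓ μ_{i−1} for each i), then there exists a sequence of distributions μ'_0, μ'_1, …, μ'_ℓ obtained by a weight-constrained sequence of moves such that μ'_0 = μ_0 and μ'_i(x) ≥ μ_i(x) for every 1 ≤ i ≤ ℓ and x ∈ ℝ. -/
/-- The total mass of `μ` on a set `A` of positions. -/
noncomputable def mass (μ : ℝ →₀ ℝ) (A : Set ℝ) : ℝ :=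
  ∑ x ∈ μ.support, Set.indicator A μ x

/-- The `j`-th moment of a finitely supported mass function. -/
noncomputable def moment (j : ℕ) (μ : ℝ →₀ ℝ) : ℝ :=
  ∑ x ∈ μ.support, μ x * x ^ j

/-- The spread `S[μ] = Σ_{i<j} m_i m_j |x_i - x_j| = (1/2)·Σ_{x,y} μ(x) μ(y) |x - y|`. -/
noncomputable def spread (μ : ℝ →₀ ℝ) : ℝ :=
  (1 / 2) * ∑ x ∈ μ.support, ∑ y ∈ μ.support, μ x * μ y * |x - y|

/-- A distribution: finitely supported, nonnegative, not identically zero. -/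
def IsDistribution (μ : ℝ →₀ ℝ) : Prop :=
  (∀ x, 0 ≤ μ x) ∧ μ ≠ 0

/-- A move `([a, a+1], δ)`: a signed distribution `δ` supported in `[a, a+1]`
with vanishing total mass and first moment. -/
structure Move where
  a : ℝ
  δ : ℝ →₀ ℝ
  supp_subset : ∀ x, δ x ≠ 0 → a ≤ x ∧ x ≤ a + 1
  m0 : moment 0 δ = 0
  m1 : moment 1 δ = 0

/-- The center of a move. -/
noncomputable def Move.center (v : Move) : ℝ := v.a + 1 / 2

/-- `μ 0, μ 1, …, μ ℓ` is a sequence of distributions obtained by applying the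
moves `v 0, …, v (ℓ-1)` in order (each move applicable, i.e. each result is a
distribution). -/
def IsMoveSeq (ℓ : ℕ) (v : ℕ → Move) (μ : ℕ → ℝ →₀ ℝ) : Prop :=
  (∀ i ≤ ℓ, IsDistribution (μ i)) ∧ ∀ i < ℓ, μ (i + 1) = μ i + (v i).δ

/-- `μ_max(A) = max_{0 ≤ i ≤ ℓ} μ_i(A)`. -/
noncomputable def muMax (ℓ : ℕ) (μ : ℕ → ℝ →₀ ℝ) (A : Set ℝ) : ℝ :=
  (Finset.range (ℓ + 1)).sup' (Finset.nonempty_range_iff.mpr (Nat.succ_ne_zero ℓ))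
    (fun i => mass (μ i) A)

open scoped Classical in
/-- The number of moves among `v 0, …, v (ℓ-1)` whose center lies in `(a, ∞)`. -/
noncomputable def movesBeyond (ℓ : ℕ) (v : ℕ → Move) (a : ℝ) : ℕ :=
  ((Finset.range ℓ).filter (fun i => a < (v i).center)).card

/-- A sequence of moves is weight-constrained (w.r.t. the generated sequence of
distributions) if for every `a` the number of moves centered in `(a, ∞)` is at
most `μ_max{x > a}`. -/
def WeightConstrained (ℓ : ℕ) (v : ℕ → Move) (μ : ℕ → ℝ →₀ ℝ) : Prop :=
  ∀ a : ℝ, (movesBeyond ℓ v a : ℝ) ≤ muMax ℓ μ {x | a < x}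

/-- `μ'` is a basic split of `μ`: one point mass `(x, μ x)` of `μ` is replaced by
finitely many point masses of positive mass with total mass `μ x` and center of
mass at `x`, the remaining point masses being unchanged. -/
def BasicSplit (μ μ' : ℝ →₀ ℝ) : Prop :=
  ∃ (x : ℝ) (ν : ℝ →₀ ℝ), 0 < μ x ∧ (∀ y, 0 ≤ ν y) ∧
    moment 0 ν = μ x ∧ moment 1 ν = μ x * x ∧ μ' = μ.erase x + ν

/-- `μ ⪯ μ'` : `μ'` is obtained from `μ` by finitely many basic splits. -/
def Splits (μ μ' : ℝ →₀ ℝ) : Prop := Relation.ReflTransGen BasicSplit μ μ'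

/-- `ν` is the result of the extreme move on `[a, b]` applied to `μ`: `ν` agrees
with `μ` outside `[a, b]`, vanishes on `(a, b)`, and has the same total mass and
first moment as `μ` (so all mass in `[a, b]` is moved to the endpoints). -/
def IsExtremeMoveOn (a b : ℝ) (μ ν : ℝ →₀ ℝ) : Prop :=
  (∀ x, x ∉ Set.Icc a b → ν x = μ x) ∧
  (∀ x, x ∈ Set.Ioo a b → ν x = 0) ∧
  moment 0 ν = moment 0 μ ∧ moment 1 ν = moment 1 μ

/-!
Undo the losses: a lossy move is an ordinary move followed by removing a unit point mass at its
center, so adding back all unit masses lost so far turns the lossy sequence `μ i` into a genuine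
move sequence `μ i + lostMass v i` with the same moves, which dominates `μ i`. It is weight-constrained
because at the last step alone the restored masses put weight `movesBeyond ℓ v a` on `{x > a}`.
-/

open Finset

lemma mass_eq_sum_of_support_subset (μ : ℝ →₀ ℝ) (A : Set ℝ) {s : Finset ℝ}
    (h : μ.support ⊆ s) : mass μ A = ∑ x ∈ s, A.indicator μ x :=
  sum_subset h fun x _ hx => by simp [Finsupp.notMem_support_iff.mp hx]

lemma mass_zero (A : Set ℝ) : mass 0 A = 0 := by
  simp [mass]

lemma mass_add (μ ν : ℝ →₀ ℝ) (A : Set ℝ) : mass (μ + ν) A = mass μ A + mass ν A := by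
  classical
  rw [mass_eq_sum_of_support_subset _ A Finsupp.support_add,
    mass_eq_sum_of_support_subset μ A subset_union_left,
    mass_eq_sum_of_support_subset ν A subset_union_right, ← sum_add_distrib]
  exact sum_congr rfl fun x _ => by simp [Set.indicator_apply, ite_add_ite]

lemma mass_sum {ι : Type*} (s : Finset ι) (f : ι → ℝ →₀ ℝ) (A : Set ℝ) :
    mass (∑ j ∈ s, f j) A = ∑ j ∈ s, mass (f j) A := by
  classical
  induction s using Finset.induction with
  | empty => simp [mass_zero]
  | insert j s hj ih => simp [sum_insert hj, mass_add, ih]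

lemma mass_single_one (c : ℝ) (A : Set ℝ) [Decidable (c ∈ A)] :
    mass (Finsupp.single c 1) A = if c ∈ A then 1 else 0 := by
  simp [mass, Set.indicator_apply]

lemma mass_nonneg {μ : ℝ →₀ ℝ} (h : ∀ x, 0 ≤ μ x) (A : Set ℝ) : 0 ≤ mass μ A :=
  sum_nonneg fun x _ => Set.indicator_nonneg (fun y _ => h y) x

lemma mass_le_muMax (ℓ : ℕ) (μ : ℕ → ℝ →₀ ℝ) (A : Set ℝ) {i : ℕ} (hi : i ≤ ℓ) :
    mass (μ i) A ≤ muMax ℓ μ A :=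
  le_sup' (fun i => mass (μ i) A) (mem_range_succ_iff.mpr hi)

lemma IsDistribution.add_of_nonneg {μ ν : ℝ →₀ ℝ} (hμ : IsDistribution μ)
    (hν : ∀ x, 0 ≤ ν x) : IsDistribution (μ + ν) := by
  refine ⟨fun x => add_nonneg (hμ.1 x) (hν x), fun h => hμ.2 ?_⟩
  ext x
  rw [Finsupp.coe_zero, Pi.zero_apply]
  have hx : μ x + ν x = 0 := DFunLike.congr_fun h x
  exact le_antisymm (by linarith [hν x]) (hμ.1 x)

noncomputable def lostMass (v : ℕ → Move) (i : ℕ) : ℝ →₀ ℝ :=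
  ∑ j ∈ range i, Finsupp.single (v j).center 1

lemma lostMass_nonneg (v : ℕ → Move) (i : ℕ) (x : ℝ) : 0 ≤ lostMass v i x := by
  rw [lostMass, Finsupp.finsetSum_apply]
  exact sum_nonneg fun j _ => Finsupp.single_nonneg.mpr zero_le_one x

lemma lostMass_succ (v : ℕ → Move) (i : ℕ) :
    lostMass v (i + 1) = lostMass v i + Finsupp.single (v i).center 1 :=
  sum_range_succ _ _

lemma mass_lostMass_Ioi (ℓ : ℕ) (v : ℕ → Move) (a : ℝ) :
    mass (lostMass v ℓ) {x | a < x} = movesBeyond ℓ v a := by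
  classical
  simp only [lostMass, mass_sum, mass_single_one, Set.mem_ofPred_eq, sum_boole, movesBeyond]

/-- **Lemma (lossy moves dominated by weight-constrained moves).** If
`μ 0, …, μ ℓ` is a sequence of distributions obtained by a sequence of lossy
moves, then there is a sequence of distributions `μ' 0, …, μ' ℓ` obtained by a
weight-constrained sequence of moves with `μ' 0 = μ 0` and `μ' i t ≥ μ i t`
for every `1 ≤ i ≤ ℓ` and `t ∈ ℝ`. -/
theorem lossy_dominated_by_weight_constrained (ℓ : ℕ) (v : ℕ → Move)
    (μ : ℕ → ℝ →₀ ℝ)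
    (hdist : ∀ i ≤ ℓ, IsDistribution (μ i))
    (hlossy : ∀ i < ℓ, μ (i + 1) = μ i + (v i).δ - Finsupp.single (v i).center 1) :
    ∃ (w : ℕ → Move) (μ' : ℕ → ℝ →₀ ℝ),
      IsMoveSeq ℓ w μ' ∧ WeightConstrained ℓ w μ' ∧ μ' 0 = μ 0 ∧
      ∀ i, 1 ≤ i → i ≤ ℓ → ∀ t : ℝ, μ i t ≤ μ' i t := by
  refine ⟨v, fun i => μ i + lostMass v i, ⟨?_, ?_⟩, ?_, ?_, ?_⟩
  · exact fun i hi => (hdist i hi).add_of_nonneg (lostMass_nonneg v i)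
  · intro i hi
    simp only [hlossy i hi, lostMass_succ]
    abel
  · intro a
    calc (movesBeyond ℓ v a : ℝ)
        ≤ mass (μ ℓ) {x | a < x} + mass (lostMass v ℓ) {x | a < x} := by
          rw [mass_lostMass_Ioi]
          linarith [mass_nonneg (hdist ℓ le_rfl).1 {x | a < x}]
      _ = mass (μ ℓ + lostMass v ℓ) {x | a < x} := (mass_add _ _ _).symm
      _ ≤ _ := mass_le_muMax ℓ (fun i => μ i + lostMass v i) _ le_rfl
  · simp [lostMass]
  · exact fun i _ _ t => le_add_of_nonneg_right (lostMass_nonneg v i t)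
end

section
/- If a distribution μ₁ is obtained from a distribution μ₀ by an extreme move on an interval of length 1, then S[μ₁] − S[μ₀] ≥ 3·(M_2[μ₁] − M_2[μ₀])². -/
/-!
Split `μ₀` into its parts outside and inside `I = [a, a + 1]`. The move keeps the outer part
and replaces the inner part `μ` by `ν = p δ_a + q δ_{a+1}` with the same mass and mean. For
`y ∉ (a, a + 1)` the map `x ↦ |x - y|` is affine on `I`, so the cross term of the spread between
the outer and the inner part only sees the mass and mean of the latter and is unchanged. It
remains to show `3 D² ≤ p q - S[μ]` for `μ` supported on `I`, where `D = M₂[ν] - M₂[μ]`.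
Writing `u = x - a` and `v = y - a`, we have `p q - S[μ] = Σ μ(x) μ(y) (min(u, v) - u v)` and
`D = Σ μ(x) u (1 - u)`. The kernel `min(u, v) - u v` (the covariance of the Brownian bridge) is
the Gram kernel of `1_{[0, u]} - u` in `L²[0, 1]`, whose inner product with `1 - 2t` is
`u (1 - u)`; as `‖1 - 2t‖² = 1 / 3`, the inequality is Cauchy–Schwarz.
-/

open Finsupp Set

noncomputable def spreadPairing (μ ν : ℝ →₀ ℝ) : ℝ :=
  μ.sum fun x m => ν.sum fun y n => m * n * |x - y|

theorem spread_eq_half_spreadPairing (μ : ℝ →₀ ℝ) :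
    spread μ = 1 / 2 * spreadPairing μ μ := rfl

theorem moment_eq_sum (j : ℕ) (μ : ℝ →₀ ℝ) :
    moment j μ = μ.sum fun x m => m * x ^ j := rfl

theorem moment_add (j : ℕ) (μ ν : ℝ →₀ ℝ) :
    moment j (μ + ν) = moment j μ + moment j ν := by
  simp only [moment_eq_sum]
  exact sum_add_index' (fun _ => zero_mul _) fun _ _ _ => add_mul _ _ _

theorem moment_single (j : ℕ) (x m : ℝ) : moment j (single x m) = m * x ^ j := by
  simp only [moment_eq_sum]
  exact sum_single_index (zero_mul _)

theorem spreadPairing_add_left (μ μ' ν : ℝ →₀ ℝ) :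
    spreadPairing (μ + μ') ν = spreadPairing μ ν + spreadPairing μ' ν :=
  sum_add_index' (fun _ => by simp) fun _ _ _ => by
    simp only [add_mul, Finsupp.sum_add]

theorem spreadPairing_comm (μ ν : ℝ →₀ ℝ) :
    spreadPairing μ ν = spreadPairing ν μ := by
  simp only [spreadPairing, Finsupp.sum]
  rw [Finset.sum_comm]
  refine Finset.sum_congr rfl fun y _ => Finset.sum_congr rfl fun x _ => ?_
  rw [abs_sub_comm, mul_comm (μ x)]

theorem spreadPairing_add_right (μ ν ν' : ℝ →₀ ℝ) :
    spreadPairing μ (ν + ν') = spreadPairing μ ν + spreadPairing μ ν' := by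
  rw [spreadPairing_comm, spreadPairing_add_left, spreadPairing_comm ν, spreadPairing_comm ν']

theorem spread_add (μ ν : ℝ →₀ ℝ) :
    spread (μ + ν) = spread μ + spread ν + spreadPairing μ ν := by
  simp only [spread_eq_half_spreadPairing, spreadPairing_add_left, spreadPairing_add_right,
    spreadPairing_comm ν μ]
  ring

theorem spreadPairing_single_single (x y m n : ℝ) :
    spreadPairing (single x m) (single y n) = m * n * |x - y| := by
  rw [spreadPairing, sum_single_index] <;> rw [sum_single_index] <;> simp

theorem spread_single_add_single (x y m n : ℝ) :
    spread (single x m + single y n) = m * n * |x - y| := by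
  rw [spread_add, spread_eq_half_spreadPairing, spread_eq_half_spreadPairing]
  simp only [spreadPairing_single_single, sub_self, abs_zero, mul_zero, zero_add]

theorem exists_spreadPairing_eq {a b : ℝ} (μ : ℝ →₀ ℝ)
    (hμ : ∀ x ∈ Ioo a b, μ x = 0) :
    ∃ α β : ℝ, ∀ ν : ℝ →₀ ℝ, (∀ y ∉ Icc a b, ν y = 0) →
      spreadPairing μ ν = α * moment 0 ν + β * moment 1 ν := by
  classical
  set s : ℝ → ℝ := fun x => if x ≤ a then -1 else 1
  refine ⟨μ.sum fun x m => m * s x * x, -μ.sum fun x m => m * s x, fun ν hν => ?_⟩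
  have habs : ∀ x ∈ μ.support, ∀ y ∈ ν.support, |x - y| = s x * x - s x * y := by
    intro x hx y hy
    obtain ⟨hay, hyb⟩ : y ∈ Icc a b := by_contra fun h => mem_support_iff.1 hy (hν y h)
    by_cases hxa : x ≤ a
    · simp only [s, if_pos hxa]; rw [abs_of_nonpos (by linarith)]; ring
    · have hbx : b ≤ x := le_of_not_gt fun h =>
        mem_support_iff.1 hx (hμ x ⟨not_le.1 hxa, h⟩)
      simp only [s, if_neg hxa]; rw [abs_of_nonneg (by linarith)]; ring
  calc spreadPairing μ ν
      = ∑ x ∈ μ.support, ∑ y ∈ ν.support,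
          (μ x * s x * x * ν y - μ x * s x * (ν y * y)) :=
        Finset.sum_congr rfl fun x hx => Finset.sum_congr rfl fun y hy => by
          dsimp only; rw [habs x hx y hy]; ring
    _ = _ := by
        simp only [Finset.sum_sub_distrib, ← Finset.mul_sum, ← Finset.sum_mul, moment,
          Finsupp.sum, pow_zero, pow_one, mul_one]
        ring

theorem sum_support_mul_eq_of_quadratic (μ : ℝ →₀ ℝ) {f : ℝ → ℝ} (c₀ c₁ c₂ : ℝ)
    (hf : ∀ x, f x = c₀ + c₁ * x + c₂ * x ^ 2) :
    ∑ x ∈ μ.support, μ x * f x = c₀ * moment 0 μ + c₁ * moment 1 μ + c₂ * moment 2 μ := by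
  simp only [moment, Finset.mul_sum, ← Finset.sum_add_distrib, hf]
  exact Finset.sum_congr rfl fun x _ => by ring

theorem single_add_single_apply_eq_zero {a b x : ℝ} (p q : ℝ) (hab : a ≤ b)
    (hx : x ∉ Icc a b) : (single a p + single b q) x = 0 := by
  have hxa : x ≠ a := by rintro rfl; exact hx ⟨le_rfl, hab⟩
  have hxb : x ≠ b := by rintro rfl; exact hx ⟨hab, le_rfl⟩
  simp [hxa, hxb]

theorem IsExtremeMoveOn.eq_filter_add {a b : ℝ} {μ ν : ℝ →₀ ℝ}
    (h : IsExtremeMoveOn a b μ ν) (hab : a < b) :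
    ν = μ.filter (· ∉ Icc a b) + (single a (ν a) + single b (ν b)) := by
  ext x
  rw [Finsupp.add_apply, filter_apply]
  by_cases hx : x ∈ Icc a b
  · rw [if_neg (not_not.2 hx), zero_add, Finsupp.add_apply]
    rcases eq_or_ne x a with rfl | hxa
    · simp [hab.ne]
    rcases eq_or_ne x b with rfl | hxb
    · simp [hxa]
    simp [hxa, hxb, h.2.1 x ⟨lt_of_le_of_ne hx.1 (Ne.symm hxa), lt_of_le_of_ne hx.2 hxb⟩]
  · rw [if_pos hx, h.1 x hx, single_add_single_apply_eq_zero _ _ hab.le hx, add_zero]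

section BrownianBridge

open MeasureTheory
open scoped RealInnerProductSpace

theorem sq_sum_mul_inner_le {ι E : Type*} [NormedAddCommGroup E] [InnerProductSpace ℝ E]
    (s : Finset ι) (w : ι → ℝ) (x : ι → E) (y : E) :
    (∑ i ∈ s, w i * ⟪x i, y⟫) ^ 2 ≤
      (∑ i ∈ s, ∑ j ∈ s, w i * w j * ⟪x i, x j⟫) * ⟪y, y⟫ := by
  have hxy : ∑ i ∈ s, w i * ⟪x i, y⟫ = ⟪∑ i ∈ s, w i • x i, y⟫ := by
    simp only [sum_inner, real_inner_smul_left]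
  have hxx : ∑ i ∈ s, ∑ j ∈ s, w i * w j * ⟪x i, x j⟫ =
      ⟪∑ i ∈ s, w i • x i, ∑ j ∈ s, w j • x j⟫ := by
    simp only [sum_inner, inner_sum, real_inner_smul_left, real_inner_smul_right]
    exact Finset.sum_congr rfl fun i _ => Finset.sum_congr rfl fun j _ => by
      rw [real_inner_comm]; ring
  rw [hxy, hxx, sq]
  exact real_inner_mul_inner_self_le _ _

local notation "L²[0,1]" => Lp ℝ 2 (volume.restrict (Icc (0 : ℝ) 1))

noncomputable def stepL2 (u : ℝ) : L²[0,1] :=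
  indicatorConstLp 2 (measurableSet_Iic (a := u)) (measure_ne_top _ _) 1

noncomputable def tiltL2 : L²[0,1] :=
  MemLp.toLp (fun t => 1 - 2 * t) <| AntitoneOn.memLp_isCompact isCompact_Icc
    fun _ _ _ _ h => by linarith

noncomputable def bridgeL2 (u : ℝ) : L²[0,1] := stepL2 u - u • stepL2 1

theorem tiltL2_ae_eq : tiltL2 =ᵐ[volume.restrict (Icc (0 : ℝ) 1)] fun t => 1 - 2 * t :=
  MemLp.coeFn_toLp _

theorem Iic_inter_Icc_zero_one {u : ℝ} (hu : u ∈ Icc (0 : ℝ) 1) :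
    Iic u ∩ Icc 0 1 = Icc 0 u := by
  ext t
  simp only [mem_inter_iff, mem_Iic, mem_Icc]
  exact ⟨fun h => ⟨h.2.1, h.1⟩, fun h => ⟨h.2, h.1, h.2.trans hu.2⟩⟩

theorem inner_stepL2_stepL2 {u v : ℝ} (hu : u ∈ Icc (0 : ℝ) 1)
    (hv : v ∈ Icc (0 : ℝ) 1) :
    ⟪stepL2 u, stepL2 v⟫ = min u v := by
  have hm : min u v ∈ Icc (0 : ℝ) 1 := ⟨le_min hu.1 hv.1, (min_le_left _ _).trans hu.2⟩
  rw [stepL2, stepL2, L2.real_inner_indicatorConstLp_one_indicatorConstLp_one, Iic_inter_Iic,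
    measureReal_restrict_apply measurableSet_Iic, Iic_inter_Icc_zero_one hm,
    Real.volume_real_Icc_of_le hm.1, sub_zero]

theorem inner_stepL2_tiltL2 {u : ℝ} (hu : u ∈ Icc (0 : ℝ) 1) :
    ⟪stepL2 u, tiltL2⟫ = u - u ^ 2 := by
  rw [stepL2, L2.inner_indicatorConstLp_one, integral_congr_ae (ae_restrict_of_ae tiltL2_ae_eq),
    Measure.restrict_restrict measurableSet_Iic, Iic_inter_Icc_zero_one hu,
    integral_Icc_eq_integral_Ioc, ← intervalIntegral.integral_of_le hu.1,
    intervalIntegral.integral_eq_sub_of_hasDerivAt (f := fun t => t - t ^ 2)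
      (fun t _ => by convert (hasDerivAt_id' t).fun_sub (hasDerivAt_pow 2 t) using 1; norm_num)
      ((by fun_prop : Continuous fun t : ℝ => 1 - 2 * t).intervalIntegrable _ _)]
  ring

theorem inner_tiltL2_tiltL2 : ⟪tiltL2, tiltL2⟫ = 1 / 3 := by
  rw [L2.inner_def, integral_congr_ae (g := fun t => (1 - 2 * t) * (1 - 2 * t))
      (tiltL2_ae_eq.mono fun t h => by simp [h, sq]),
    integral_Icc_eq_integral_Ioc, ← intervalIntegral.integral_of_le zero_le_one,
    intervalIntegral.integral_eq_sub_of_hasDerivAt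
      (f := fun t => t - 2 * t ^ 2 + 4 / 3 * t ^ 3)
      (fun t _ => by
        convert ((hasDerivAt_id' t).fun_sub ((hasDerivAt_pow 2 t).const_mul 2)).fun_add
          ((hasDerivAt_pow 3 t).const_mul (4 / 3)) using 1
        norm_num; ring)
      ((by fun_prop : Continuous fun t : ℝ => (1 - 2 * t) * (1 - 2 * t)).intervalIntegrable _ _)]
  norm_num

theorem inner_bridgeL2_bridgeL2 {u v : ℝ} (hu : u ∈ Icc (0 : ℝ) 1)
    (hv : v ∈ Icc (0 : ℝ) 1) :
    ⟪bridgeL2 u, bridgeL2 v⟫ = min u v - u * v := by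
  have h1 : (1 : ℝ) ∈ Icc (0 : ℝ) 1 := ⟨zero_le_one, le_rfl⟩
  simp only [bridgeL2, inner_sub_left, inner_sub_right, real_inner_smul_left,
    real_inner_smul_right, inner_stepL2_stepL2 hu hv, inner_stepL2_stepL2 hu h1,
    inner_stepL2_stepL2 h1 hv, inner_stepL2_stepL2 h1 h1, min_eq_left hu.2, min_eq_right hv.2,
    min_self]
  ring

theorem inner_bridgeL2_tiltL2 {u : ℝ} (hu : u ∈ Icc (0 : ℝ) 1) :
    ⟪bridgeL2 u, tiltL2⟫ = u * (1 - u) := by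
  simp only [bridgeL2, inner_sub_left, real_inner_smul_left, inner_stepL2_tiltL2 hu,
    inner_stepL2_tiltL2 (⟨zero_le_one, le_rfl⟩ : (1 : ℝ) ∈ Icc (0 : ℝ) 1)]
  ring

theorem three_mul_sq_sum_le_sum_sum_min_sub_mul {ι : Type*} (s : Finset ι) (w u : ι → ℝ)
    (hu : ∀ i ∈ s, u i ∈ Icc (0 : ℝ) 1) :
    3 * (∑ i ∈ s, w i * (u i * (1 - u i))) ^ 2 ≤
      ∑ i ∈ s, ∑ j ∈ s, w i * w j * (min (u i) (u j) - u i * u j) := by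
  have h := sq_sum_mul_inner_le s w (fun i => bridgeL2 (u i)) tiltL2
  rw [inner_tiltL2_tiltL2,
    Finset.sum_congr rfl fun i hi => by rw [inner_bridgeL2_tiltL2 (hu i hi)],
    Finset.sum_congr rfl fun i hi => Finset.sum_congr rfl fun j hj => by
      rw [inner_bridgeL2_bridgeL2 (hu i hi) (hu j hj)]] at h
  linarith

end BrownianBridge

theorem mul_sub_half_sum_sum_abs_eq {ι : Type*} (s : Finset ι) (w u : ι → ℝ) :
    (∑ i ∈ s, w i * (1 - u i)) * (∑ i ∈ s, w i * u i) -
        1 / 2 * ∑ i ∈ s, ∑ j ∈ s, w i * w j * |u i - u j| =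
      ∑ i ∈ s, ∑ j ∈ s, w i * w j * (min (u i) (u j) - u i * u j) := by
  have hpair (x y : ℝ) : min x y - x * y = ((1 - x) * y + (1 - y) * x - |x - y|) / 2 := by
    rcases le_total x y with h | h
    · rw [min_eq_left h, abs_of_nonpos (sub_nonpos.2 h)]; ring
    · rw [min_eq_right h, abs_of_nonneg (sub_nonneg.2 h)]; ring
  have hswap : ∑ i ∈ s, ∑ j ∈ s, w j * (1 - u j) * (w i * u i) =
      ∑ i ∈ s, ∑ j ∈ s, w i * (1 - u i) * (w j * u j) := Finset.sum_comm
  calc (∑ i ∈ s, w i * (1 - u i)) * (∑ i ∈ s, w i * u i) -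
          1 / 2 * ∑ i ∈ s, ∑ j ∈ s, w i * w j * |u i - u j|
      = 1 / 2 * (∑ i ∈ s, ∑ j ∈ s, w i * (1 - u i) * (w j * u j) +
          ∑ i ∈ s, ∑ j ∈ s, w j * (1 - u j) * (w i * u i)) -
          1 / 2 * ∑ i ∈ s, ∑ j ∈ s, w i * w j * |u i - u j| := by
        rw [hswap, Finset.sum_mul_sum]; ring
    _ = _ := by
        simp only [hpair, ← Finset.sum_add_distrib, Finset.mul_sum, ← Finset.sum_sub_distrib]
        exact Finset.sum_congr rfl fun i _ => Finset.sum_congr rfl fun j _ => by ring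

theorem three_mul_sq_moment_two_sub_le {a p q : ℝ} {μ : ℝ →₀ ℝ}
    (hμ : ∀ x ∉ Icc a (a + 1), μ x = 0)
    (h0 : moment 0 μ = moment 0 (single a p + single (a + 1) q))
    (h1 : moment 1 μ = moment 1 (single a p + single (a + 1) q)) :
    3 * (moment 2 (single a p + single (a + 1) q) - moment 2 μ) ^ 2 ≤
      spread (single a p + single (a + 1) q) - spread μ := by
  simp only [moment_add, moment_single, pow_zero, pow_one, mul_one] at h0 h1 ⊢
  have hu : ∀ x ∈ μ.support, x - a ∈ Icc (0 : ℝ) 1 := fun x hx => by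
    obtain ⟨hax, hxa⟩ : x ∈ Icc a (a + 1) := by_contra fun h => mem_support_iff.1 hx (hμ x h)
    exact ⟨by linarith, by linarith⟩
  have hp : ∑ x ∈ μ.support, μ x * (1 - (x - a)) = p := by
    rw [sum_support_mul_eq_of_quadratic μ (1 + a) (-1) 0 fun x => by ring, h0, h1]; ring
  have hq : ∑ x ∈ μ.support, μ x * (x - a) = q := by
    rw [sum_support_mul_eq_of_quadratic μ (-a) 1 0 fun x => by ring, h0, h1]; ring
  have hD : ∑ x ∈ μ.support, μ x * ((x - a) * (1 - (x - a))) =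
      p * a ^ 2 + q * (a + 1) ^ 2 - moment 2 μ := by
    rw [sum_support_mul_eq_of_quadratic μ (-(a * (a + 1))) (2 * a + 1) (-1) fun x => by ring,
      h0, h1]
    ring
  have hS : spread μ =
      1 / 2 * ∑ x ∈ μ.support, ∑ y ∈ μ.support, μ x * μ y * |(x - a) - (y - a)| := by
    simp only [spread, sub_sub_sub_cancel_right]
  have key := three_mul_sq_sum_le_sum_sum_min_sub_mul μ.support μ (· - a) hu
  rw [← mul_sub_half_sum_sum_abs_eq, hp, hq, hD, ← hS] at key
  rw [spread_single_add_single, abs_of_neg (by linarith : a - (a + 1) < 0)]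
  linarith

theorem extreme_move_spread_general (a : ℝ) (μ₀ μ₁ : ℝ →₀ ℝ)
    (hext : IsExtremeMoveOn a (a + 1) μ₀ μ₁) :
    spread μ₁ - spread μ₀ ≥ 3 * (moment 2 μ₁ - moment 2 μ₀) ^ 2 := by
  classical
  set μin := μ₀.filter (· ∈ Icc a (a + 1))
  set μout := μ₀.filter (· ∉ Icc a (a + 1))
  set ν := single a (μ₁ a) + single (a + 1) (μ₁ (a + 1))
  have h₀ : μ₀ = μout + μin := by rw [add_comm]; exact (filter_add_filter_not _ _).symm
  have h₁ : μ₁ = μout + ν := hext.eq_filter_add (by linarith)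
  have hmoment (j : ℕ) : moment j μ₁ - moment j μ₀ = moment j ν - moment j μin := by
    rw [h₀, h₁, moment_add j μout ν, moment_add j μout μin]; ring
  have hμin : ∀ x ∉ Icc a (a + 1), μin x = 0 := fun x hx => by rw [filter_apply, if_neg hx]
  have hν : ∀ x ∉ Icc a (a + 1), ν x = 0 := fun x =>
    single_add_single_apply_eq_zero _ _ (by linarith)
  have hν0 : moment 0 μin = moment 0 ν := by linarith [hmoment 0, hext.2.2.1]
  have hν1 : moment 1 μin = moment 1 ν := by linarith [hmoment 1, hext.2.2.2]
  obtain ⟨α, β, hαβ⟩ := exists_spreadPairing_eq μout fun x hx => by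
    rw [filter_apply, if_neg (not_not.2 (Ioo_subset_Icc_self hx))]
  have hspread : spread μ₁ - spread μ₀ = spread ν - spread μin := by
    rw [h₀, h₁, spread_add μout ν, spread_add μout μin, hαβ ν hν, hαβ μin hμin, hν0, hν1]
    ring
  rw [ge_iff_le, hspread, hmoment 2]
  exact three_mul_sq_moment_two_sub_le hμin hν0 hν1

/-- **Lemma (extreme moves increase spread).** If `μ₁` is obtained from `μ₀` by
an extreme move in an interval of length `1`, then
`S[μ₁] − S[μ₀] ≥ 3 (M₂[μ₁] − M₂[μ₀])²`. -/
theorem extreme_move_spread (a : ℝ) (μ₀ μ₁ : ℝ →₀ ℝ)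
    (h₀ : IsDistribution μ₀) (h₁ : IsDistribution μ₁)
    (hext : IsExtremeMoveOn a (a + 1) μ₀ μ₁) :
    spread μ₁ - spread μ₀ ≥ 3 * (moment 2 μ₁ - moment 2 μ₀) ^ 2 :=
  extreme_move_spread_general a μ₀ μ₁ hext
end

section
/- If V = ⟨v_1,…,v_ℓ⟩ is a sequence of moves that can be applied (in order) to a distribution μ, then M_2[Vμ] ≤ M_2[V̄μ], where V̄ is the corresponding sequence of extreme moves. -/
/-!
Extreme moves dominate arbitrary moves in the convex order. Suppose `∫ f dμ ≤ ∫ f dν` for every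
convex `f`, and a move `δ` on `[a, b]` is applied to `μ` while the extreme move on `[a, b]` takes
`ν` to `ν'`. Test a convex `f` against `g = max f s`, where `s` is the secant of `f` over
`[a, b]`: `g` is convex, affine on `[a, b]` (so neither `δ` nor the extreme move changes its
integral) and equal to `f` off `(a, b)`, where the extreme move puts all its mass.
Hence `∫ f d(μ + δ) ≤ ∫ g dμ ≤ ∫ g dν = ∫ f dν'`.
Iterating and testing against `x ↦ x²` gives the inequality of second moments.
-/

open Set

noncomputable def integral (μ : ℝ →₀ ℝ) (f : ℝ → ℝ) : ℝ :=
  μ.sum fun x m => m * f x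

section Integral

variable {μ ν : ℝ →₀ ℝ} {f g : ℝ → ℝ}

lemma integral_add (μ ν : ℝ →₀ ℝ) (f : ℝ → ℝ) :
    integral (μ + ν) f = integral μ f + integral ν f :=
  Finsupp.sum_add_index' (fun _ => zero_mul _) (fun _ _ _ => add_mul _ _ _)

lemma integral_sub (μ ν : ℝ →₀ ℝ) (f : ℝ → ℝ) :
    integral (μ - ν) f = integral μ f - integral ν f :=
  Finsupp.sum_sub_index fun _ _ _ => sub_mul _ _ _

lemma integral_mono (hμ : ∀ x, 0 ≤ μ x) (hfg : ∀ x, f x ≤ g x) :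
    integral μ f ≤ integral μ g :=
  Finset.sum_le_sum fun x _ => mul_le_mul_of_nonneg_left (hfg x) (hμ x)

lemma integral_congr (h : ∀ x, μ x ≠ 0 → f x = g x) : integral μ f = integral μ g :=
  Finset.sum_congr rfl fun x hx => congrArg (μ x * ·) (h x (Finsupp.mem_support_iff.mp hx))

lemma integral_affine (μ : ℝ →₀ ℝ) (c m : ℝ) :
    integral μ (fun x => c + m * x) = c * moment 0 μ + m * moment 1 μ := by
  simp only [integral, moment, Finsupp.sum, Finset.mul_sum, ← Finset.sum_add_distrib]
  exact Finset.sum_congr rfl fun x _ => by ring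

lemma moment_sub (j : ℕ) (μ ν : ℝ →₀ ℝ) : moment j (μ - ν) = moment j μ - moment j ν :=
  integral_sub μ ν (· ^ j)

end Integral

def IsBalancedOn (a b : ℝ) (ρ : ℝ →₀ ℝ) : Prop :=
  (∀ x, ρ x ≠ 0 → x ∈ Icc a b) ∧ moment 0 ρ = 0 ∧ moment 1 ρ = 0

lemma IsBalancedOn.integral_eq_zero {a b c m : ℝ} {ρ : ℝ →₀ ℝ} {g : ℝ → ℝ}
    (hρ : IsBalancedOn a b ρ) (hg : ∀ x ∈ Icc a b, g x = c + m * x) : integral ρ g = 0 := by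
  rw [integral_congr fun x hx => hg x (hρ.1 x hx), integral_affine, hρ.2.1, hρ.2.2]
  ring

lemma Move.isBalancedOn (v : Move) : IsBalancedOn v.a (v.a + 1) v.δ :=
  ⟨fun x hx => v.supp_subset x hx, v.m0, v.m1⟩

lemma IsExtremeMoveOn.isBalancedOn_sub {a b : ℝ} {μ ν : ℝ →₀ ℝ}
    (h : IsExtremeMoveOn a b μ ν) : IsBalancedOn a b (ν - μ) := by
  refine ⟨fun x hx => ?_, ?_, ?_⟩
  · by_contra hx'
    exact hx (by rw [Finsupp.sub_apply, h.1 x hx', sub_self])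
  · rw [moment_sub, h.2.2.1, sub_self]
  · rw [moment_sub, h.2.2.2, sub_self]

noncomputable def secant (f : ℝ → ℝ) (a b x : ℝ) : ℝ :=
  f a + (f b - f a) / (b - a) * (x - a)

section Secant

variable {f : ℝ → ℝ} {a b x : ℝ}

lemma secant_eq_affine (f : ℝ → ℝ) (a b x : ℝ) :
    secant f a b x = (f a - (f b - f a) / (b - a) * a) + (f b - f a) / (b - a) * x := by
  unfold secant
  ring

lemma convexOn_secant (f : ℝ → ℝ) (a b : ℝ) : ConvexOn ℝ univ (secant f a b) := by
  simp only [funext (secant_eq_affine f a b)]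
  exact (convexOn_const _ convex_univ).add ((LinearMap.mulLeft ℝ _).convexOn convex_univ)

lemma ConvexOn.le_secant (hf : ConvexOn ℝ univ f) (hx : x ∈ Icc a b) :
    f x ≤ secant f a b x := by
  rcases hx.1.eq_or_lt with rfl | hax
  · simp [secant]
  have hslope := hf.secant_mono (mem_univ a) (mem_univ x) (mem_univ b) hax.ne'
    (hax.trans_le hx.2).ne' hx.2
  rw [div_le_iff₀ (sub_pos.mpr hax)] at hslope
  unfold secant
  linarith

lemma ConvexOn.secant_le (hf : ConvexOn ℝ univ f) (hab : a < b) (hx : x ∉ Ioo a b) :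
    secant f a b x ≤ f x := by
  unfold secant
  rcases (not_and_or.mp hx).imp le_of_not_gt le_of_not_gt with hxa | hbx
  · rcases hxa.eq_or_lt with rfl | hxa
    · simp
    have hslope := hf.secant_mono (mem_univ a) (mem_univ x) (mem_univ b) hxa.ne hab.ne'
      (hxa.trans hab).le
    rw [div_le_iff_of_neg (sub_neg.mpr hxa)] at hslope
    linarith
  · have hslope := hf.secant_mono (mem_univ a) (mem_univ b) (mem_univ x) hab.ne'
      (hab.trans_le hbx).ne' hbx
    rw [le_div_iff₀ (sub_pos.mpr (hab.trans_le hbx))] at hslope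
    linarith

end Secant

def ConvexLE (μ ν : ℝ →₀ ℝ) : Prop :=
  ∀ f : ℝ → ℝ, ConvexOn ℝ univ f → integral μ f ≤ integral ν f

lemma ConvexLE.refl (μ : ℝ →₀ ℝ) : ConvexLE μ μ := fun _ _ => le_rfl

lemma ConvexLE.add_balanced_extreme {a b : ℝ} {μ ν ν' δ : ℝ →₀ ℝ} (h : ConvexLE μ ν)
    (hab : a < b) (hδ : IsBalancedOn a b δ) (hpos : ∀ x, 0 ≤ (μ + δ) x)
    (hext : IsExtremeMoveOn a b ν ν') : ConvexLE (μ + δ) ν' := by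
  intro f hf
  set g : ℝ → ℝ := fun x => max (f x) (secant f a b x)
  have hg : ConvexOn ℝ univ g := hf.sup (convexOn_secant f a b)
  have hg_Icc : ∀ x ∈ Icc a b, g x = _ + _ * x := fun x hx =>
    (max_eq_right (hf.le_secant hx)).trans (secant_eq_affine f a b x)
  have hg_off : ∀ x ∉ Ioo a b, g x = f x := fun x hx => max_eq_left (hf.secant_le hab hx)
  calc integral (μ + δ) f
      ≤ integral (μ + δ) g := integral_mono hpos fun x => le_max_left _ _
    _ = integral μ g := by rw [integral_add, hδ.integral_eq_zero hg_Icc, add_zero]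
    _ ≤ integral ν g := h g hg
    _ = integral ν' g := by
      have := hext.isBalancedOn_sub.integral_eq_zero hg_Icc
      rw [integral_sub] at this
      linarith
    _ = integral ν' f := integral_congr fun x hx => hg_off x fun hx' => hx (hext.2.1 x hx')

/-- **Corollary.** If `V = ⟨v 0, …, v (ℓ-1)⟩` is a sequence of moves that can be
applied in order to `μ 0`, generating `μ 0, …, μ ℓ`, and `ν 0, …, ν ℓ` is
generated from `ν 0 = μ 0` by the corresponding sequence of extreme moves, then
`M₂[Vμ] ≤ M₂[V̄μ]`, i.e. `M₂[μ ℓ] ≤ M₂[ν ℓ]`. -/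
theorem moves_second_moment_extreme_seq (ℓ : ℕ) (v : ℕ → Move) (μ ν : ℕ → ℝ →₀ ℝ)
    (hseq : IsMoveSeq ℓ v μ) (hν0 : ν 0 = μ 0)
    (hext : ∀ i < ℓ, IsExtremeMoveOn (v i).a ((v i).a + 1) (ν i) (ν (i + 1))) :
    moment 2 (μ ℓ) ≤ moment 2 (ν ℓ) := by
  have hcx : ∀ i ≤ ℓ, ConvexLE (μ i) (ν i) := by
    intro i hi
    induction i with
    | zero => exact hν0 ▸ ConvexLE.refl _
    | succ i ih =>
      have hstep := hseq.2 i hi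
      rw [hstep]
      exact (ih (Nat.le_of_succ_le hi)).add_balanced_extreme (by linarith) (v i).isBalancedOn
        (hstep ▸ (hseq.1 (i + 1) hi).1) (hext i hi)
  exact hcx ℓ le_rfl _ (Even.convexOn_pow even_two)
end
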